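/- For complex q with |q| < 1, the identity (1/2) + sum_{n=1}^{infinity} [(-q^2;q^2)_{n-1} / (q^2;q^2)_n] (-q)^n = (1/2) * (q;q^2)_infinity / (-q;q^2)_infinity holds. -/

import Mathlib

/-- `(A;q)_n` -/
noncomputable def qp (q a : ℂ) (n : ℕ) : ℂ :=
  ∏ k ∈ Finset.range n, (1 - a * q ^ k)

/-- `(A;q)_∞` -/
noncomputable def qpinf (q a : ℂ) : ℂ := ∏' k : ℕ, (1 - a * q ^ k)

/-!
Since `(-1;q²)_{n+1} = 2 (-q²;q²)_n`, the series is half of the q-binomial series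
`S(z) = ∑ (a;Q)_n / (Q;Q)_n zⁿ` at `Q = q²`, `a = -1`, `z = -q`, minus its constant term `1`.
Comparing coefficients gives the functional equation `(1 - z) S(z) = (1 - a z) S(Q z)`;
iterating it `N` times and letting `N → ∞`, where `S(Qᴺ z) → S(0) = 1` by dominated convergence,
yields the q-binomial theorem `S(z) = (az;Q)_∞ / (z;Q)_∞`.
-/

open Filter Topology Finset

section QPochhammer

variable {q a : ℂ}

lemma qp_succ (q a : ℂ) (n : ℕ) : qp q a (n + 1) = qp q a n * (1 - a * q ^ n) :=
  prod_range_succ _ n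

lemma qp_succ' (q a : ℂ) (n : ℕ) : qp q a (n + 1) = (1 - a) * qp q (a * q) n := by
  rw [qp, prod_range_succ', pow_zero, mul_one, mul_comm]
  exact congrArg _ (prod_congr rfl fun k _ => by ring)

lemma norm_pow_mul_le (hq : ‖q‖ ≤ 1) (n : ℕ) (z : ℂ) : ‖q ^ n * z‖ ≤ ‖z‖ := by
  rw [norm_mul, norm_pow]
  exact mul_le_of_le_one_left (norm_nonneg z) (pow_le_one₀ (norm_nonneg q) hq)

lemma one_sub_mul_pow_ne_zero (hq : ‖q‖ ≤ 1) (ha : ‖a‖ < 1) (k : ℕ) : 1 - a * q ^ k ≠ 0 := by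
  have hlt : ‖q ^ k * a‖ < 1 := (norm_pow_mul_le hq k a).trans_lt ha
  intro h
  rw [mul_comm, ← sub_eq_zero.mp h, norm_one] at hlt
  exact lt_irrefl _ hlt

lemma qp_ne_zero (hq : ‖q‖ ≤ 1) (ha : ‖a‖ < 1) (n : ℕ) : qp q a n ≠ 0 :=
  prod_ne_zero_iff.2 fun k _ => one_sub_mul_pow_ne_zero hq ha k

lemma summable_norm_neg_mul_pow (hq : ‖q‖ < 1) (a : ℂ) :
    Summable fun k : ℕ => ‖-(a * q ^ k)‖ := by
  simpa only [norm_neg, norm_mul, norm_pow] using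
    (summable_geometric_of_lt_one (norm_nonneg q) hq).mul_left ‖a‖

lemma hasProd_qpinf (hq : ‖q‖ < 1) (a : ℂ) : HasProd (fun k : ℕ => 1 - a * q ^ k) (qpinf q a) := by
  simpa only [qpinf, ← sub_eq_add_neg] using
    (multipliable_one_add_of_summable (summable_norm_neg_mul_pow hq a)).hasProd

lemma tendsto_qp_qpinf (hq : ‖q‖ < 1) (a : ℂ) : Tendsto (qp q a) atTop (𝓝 (qpinf q a)) :=
  (hasProd_qpinf hq a).tendsto_prod_nat

lemma qpinf_ne_zero (hq : ‖q‖ < 1) (ha : ‖a‖ < 1) : qpinf q a ≠ 0 := by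
  simpa only [qpinf, ← sub_eq_add_neg] using tprod_one_add_ne_zero_of_summable
    (by simpa only [← sub_eq_add_neg] using one_sub_mul_pow_ne_zero hq.le ha)
    (summable_norm_neg_mul_pow hq a)

end QPochhammer

section QBinomial

noncomputable def qBinomialCoeff (q a : ℂ) (n : ℕ) : ℂ := qp q a n / qp q q n

noncomputable def qBinomialSeries (q a z : ℂ) : ℂ := ∑' n : ℕ, qBinomialCoeff q a n * z ^ n

variable {q a z : ℂ}

@[simp]
lemma qBinomialCoeff_zero : qBinomialCoeff q a 0 = 1 := by
  simp [qBinomialCoeff, qp]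

lemma qBinomialCoeff_succ (q a : ℂ) (n : ℕ) :
    qBinomialCoeff q a (n + 1) = qBinomialCoeff q a n * ((1 - a * q ^ n) / (1 - q * q ^ n)) := by
  rw [qBinomialCoeff, qBinomialCoeff, qp_succ, qp_succ, mul_div_mul_comm]

lemma qBinomialCoeff_succ_mul (hq : ‖q‖ < 1) (a : ℂ) (n : ℕ) :
    qBinomialCoeff q a (n + 1) * (1 - q * q ^ n) = qBinomialCoeff q a n * (1 - a * q ^ n) := by
  rw [qBinomialCoeff_succ, mul_assoc, div_mul_cancel₀ _ (one_sub_mul_pow_ne_zero hq.le hq n)]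

lemma summable_norm_qBinomialCoeff_mul_pow (hq : ‖q‖ < 1) (a : ℂ) (hz : ‖z‖ < 1) :
    Summable fun n : ℕ => ‖qBinomialCoeff q a n * z ^ n‖ := by
  set ratio : ℕ → ℂ := fun n => (1 - a * q ^ n) / (1 - q * q ^ n) * z
  have hratio : Tendsto ratio atTop (𝓝 z) := by
    have hpow := tendsto_pow_atTop_nhds_zero_of_norm_lt_one hq
    simpa [ratio] using (((tendsto_const_nhds (x := (1 : ℂ))).sub (hpow.const_mul a)).div
      (tendsto_const_nhds.sub (hpow.const_mul q)) (by simp : (1 : ℂ) - q * 0 ≠ 0)).mul_const z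
  have hsmall : ∀ᶠ n in atTop, ‖ratio n‖ ≤ (1 + ‖z‖) / 2 :=
    hratio.norm.eventually_le_const (by linarith)
  refine summable_of_ratio_norm_eventually_le (r := (1 + ‖z‖) / 2) (by linarith) ?_
  filter_upwards [hsmall] with n hn
  rw [norm_norm, norm_norm, qBinomialCoeff_succ, pow_succ,
    show ∀ c r : ℂ, c * r * (z ^ n * z) = c * z ^ n * (r * z) by intros; ring, norm_mul, mul_comm]
  exact mul_le_mul_of_nonneg_right hn (norm_nonneg _)

lemma hasSum_qBinomialSeries (hq : ‖q‖ < 1) (a : ℂ) (hz : ‖z‖ < 1) :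
    HasSum (fun n : ℕ => qBinomialCoeff q a n * z ^ n) (qBinomialSeries q a z) :=
  (summable_norm_qBinomialCoeff_mul_pow hq a hz).of_norm.hasSum

lemma one_sub_mul_qBinomialSeries (hq : ‖q‖ < 1) (a : ℂ) (hz : ‖z‖ < 1) :
    (1 - z) * qBinomialSeries q a z = (1 - a * z) * qBinomialSeries q a (q * z) := by
  have hqz : ‖q * z‖ < 1 := by
    rw [norm_mul]; exact mul_lt_one_of_nonneg_of_lt_one_left (norm_nonneg q) hq hz.le
  have hz' := hasSum_qBinomialSeries hq a hz
  have hqz' := hasSum_qBinomialSeries hq a hqz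
  have hdiff := (hasSum_nat_add_iff' 1).2 (hz'.sub hqz')
  simp only [sum_range_one, pow_zero, sub_self, sub_zero] at hdiff
  have hcoeff : (fun n : ℕ => qBinomialCoeff q a (n + 1) * z ^ (n + 1) -
      qBinomialCoeff q a (n + 1) * (q * z) ^ (n + 1)) =
      fun n => z * (qBinomialCoeff q a n * z ^ n) - a * z * (qBinomialCoeff q a n * (q * z) ^ n) :=
    funext fun n => by linear_combination z ^ (n + 1) * qBinomialCoeff_succ_mul hq a n
  rw [hcoeff] at hdiff
  linear_combination hdiff.unique ((hz'.mul_left z).sub (hqz'.mul_left (a * z)))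

lemma qp_mul_qBinomialSeries (hq : ‖q‖ < 1) (a : ℂ) (hz : ‖z‖ < 1) (N : ℕ) :
    qp q z N * qBinomialSeries q a z = qp q (a * z) N * qBinomialSeries q a (q ^ N * z) := by
  induction N with
  | zero => simp [qp]
  | succ N ih =>
    have hstep := one_sub_mul_qBinomialSeries hq a ((norm_pow_mul_le hq.le N z).trans_lt hz)
    rw [show q * (q ^ N * z) = q ^ (N + 1) * z by ring] at hstep
    rw [qp_succ, qp_succ]
    linear_combination (1 - z * q ^ N) * ih + qp q (a * z) N * hstep

lemma tendsto_qBinomialSeries_pow_mul (hq : ‖q‖ < 1) (a : ℂ) (hz : ‖z‖ < 1) :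
    Tendsto (fun N : ℕ => qBinomialSeries q a (q ^ N * z)) atTop (𝓝 1) := by
  have hzero : ∑' n : ℕ, qBinomialCoeff q a n * (0 : ℂ) ^ n = 1 := by
    rw [tsum_eq_single 0 fun n hn => by simp [hn]]
    simp
  rw [← hzero]
  refine tendsto_tsum_of_dominated_convergence (summable_norm_qBinomialCoeff_mul_pow hq a hz)
    (fun n => ?_) (Eventually.of_forall fun N n => ?_)
  · simpa using (((tendsto_pow_atTop_nhds_zero_of_norm_lt_one hq).mul_const z).pow n).const_mul
      (qBinomialCoeff q a n)
  · rw [norm_mul, norm_mul, norm_pow, norm_pow]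
    gcongr
    exact norm_pow_mul_le hq.le N z

theorem qBinomialSeries_eq (hq : ‖q‖ < 1) (a : ℂ) (hz : ‖z‖ < 1) :
    qBinomialSeries q a z = qpinf q (a * z) / qpinf q z := by
  rw [eq_div_iff (qpinf_ne_zero hq hz), mul_comm]
  refine tendsto_nhds_unique ((tendsto_qp_qpinf hq z).mul_const _) ?_
  have hlim := (tendsto_qp_qpinf hq (a * z)).mul (tendsto_qBinomialSeries_pow_mul hq a hz)
  rw [mul_one] at hlim
  exact hlim.congr fun N => (qp_mul_qBinomialSeries hq a hz N).symm

end QBinomial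

theorem half_plus_series (q : ℂ) (hq : ‖q‖ < 1) :
    (1 / 2 : ℂ) + ∑' n : ℕ, qp (q ^ 2) (-q ^ 2) n / qp (q ^ 2) (q ^ 2) (n + 1) * (-q) ^ (n + 1) =
      (1 / 2) * qpinf (q ^ 2) q / qpinf (q ^ 2) (-q) := by
  have hq2 : ‖q ^ 2‖ < 1 := by rw [norm_pow]; exact pow_lt_one₀ (norm_nonneg q) hq two_ne_zero
  have hnegq : ‖-q‖ < 1 := by rwa [norm_neg]
  have hterm : ∀ n : ℕ, qp (q ^ 2) (-q ^ 2) n / qp (q ^ 2) (q ^ 2) (n + 1) * (-q) ^ (n + 1) =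
      1 / 2 * (qBinomialCoeff (q ^ 2) (-1) (n + 1) * (-q) ^ (n + 1)) := by
    intro n
    rw [qBinomialCoeff, qp_succ' _ (-1), neg_one_mul]
    ring
  have htail := (hasSum_nat_add_iff' 1).2 (hasSum_qBinomialSeries hq2 (-1) hnegq)
  rw [tsum_congr hterm, tsum_mul_left, htail.tsum_eq, qBinomialSeries_eq hq2 (-1) hnegq,
    neg_one_mul, neg_neg, sum_range_one, qBinomialCoeff_zero, pow_zero]
  ring
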